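/- Let μ, γ, Q > 0 and let Δ : ℕ → ℝ satisfy Δ(t+1) ≤ (1 − η_t·μ)·Δ(t) + η_t²·Q for all t, where η_t = 2/(μ·(γ + t)) and γ ≥ 1. Let v = max(4·Q/μ², (γ + 1)·Δ(1)). Then Δ(t) ≤ v/(γ + t) for all t ≥ 1. -/

import Mathlib

theorem fedavg_induction_lemma (μ γ Q : ℝ) (hμ : 0 < μ) (hγ : 1 ≤ γ) (hQ : 0 < Q)
    (Δ : ℕ → ℝ) (η : ℕ → ℝ) (hη : ∀ t, η t = 2 / (μ * (γ + t)))
    (hrec : ∀ t, Δ (t + 1) ≤ (1 - η t * μ) * Δ t + (η t) ^ 2 * Q)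
    (v : ℝ) (hv : v = max (4 * Q / μ ^ 2) ((γ + 1) * Δ 1)) :
    ∀ t, 1 ≤ t → Δ t ≤ v / (γ + t) := by
  have hvQ : 4 * Q / μ ^ 2 ≤ v := hv ▸ le_max_left _ _
  have hvpos : 0 < v := lt_of_lt_of_le (by positivity) hvQ
  have hvQ' : 4 * Q ≤ v * μ ^ 2 := by
    rw [div_le_iff₀ (by positivity)] at hvQ; linarith
  intro t ht
  induction t with
  | zero => omega
  | succ n ih =>
    rcases Nat.lt_or_ge n 1 with h1 | h1
    · -- base case: n = 0
      have hn0 : n = 0 := by omega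
      subst hn0
      have hv1 : (γ + 1) * Δ 1 ≤ v := hv ▸ le_max_right _ _
      have hg : (0:ℝ) < γ + 1 := by linarith
      push_cast
      rw [le_div_iff₀ hg]
      linarith [hv1]
    · -- inductive step
      have ihn := ih h1
      have hn1 : (1:ℝ) ≤ (n:ℝ) := by exact_mod_cast h1
      have hG2 : (2:ℝ) ≤ γ + n := by linarith
      have hGpos : (0:ℝ) < γ + n := by linarith
      have hμG : (0:ℝ) < μ * (γ + n) := by positivity
      have hrecn := hrec n
      rw [hη n] at hrecn
      have hηsimp : 2 / (μ * (γ + (n:ℝ))) * μ = 2 / (γ + n) := by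
        field_simp
      rw [hηsimp] at hrecn
      have hcoef : (0:ℝ) ≤ 1 - 2 / (γ + n) := by
        rw [sub_nonneg, div_le_one hGpos]; linarith
      have h2 : (1 - 2 / (γ + (n:ℝ))) * Δ n ≤ (1 - 2 / (γ + n)) * (v / (γ + n)) :=
        mul_le_mul_of_nonneg_left ihn hcoef
      have key : (1 - 2 / (γ + (n:ℝ))) * (v / (γ + n)) + (2 / (μ * (γ + n))) ^ 2 * Q
          ≤ v / (γ + (n + 1)) := by
        have hG1 : (0:ℝ) < γ + (n + 1) := by linarith
        have expand : (1 - 2 / (γ + (n:ℝ))) * (v / (γ + n)) + (2 / (μ * (γ + n))) ^ 2 * Q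
            = ((γ + (n:ℝ) - 2) * v * μ ^ 2 + 4 * Q) / (μ ^ 2 * (γ + n) ^ 2) := by
          field_simp
          ring
        rw [expand, div_le_div_iff₀ (by positivity) hG1]
        nlinarith [mul_le_mul_of_nonneg_right hvQ' hGpos.le,
          mul_pos (mul_pos hvpos (pow_pos hμ 2)) hGpos, mul_pos hvpos (pow_pos hμ 2)]
      push_cast
      calc Δ (n + 1) ≤ (1 - 2 / (γ + (n:ℝ))) * Δ n + (2 / (μ * (γ + n))) ^ 2 * Q := hrecn
        _ ≤ (1 - 2 / (γ + (n:ℝ))) * (v / (γ + n)) + (2 / (μ * (γ + n))) ^ 2 * Q := by linarith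
        _ ≤ v / (γ + (n + 1)) := key
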